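/- Let g be a finite-dimensional real Lie algebra with ad-invariant nondegenerate symmetric bilinear form, and h, k subalgebras satisfying h^⊥ + k^⊥ = g (equivalently h ∩ k orthogonality condition). Then for any ξ ∈ g, [dim((h^⊥+[ξ,g]) ∩ k^⊥) − dim[ξ,k]] + [dim((k^⊥+[ξ,g]) ∩ h^⊥) − dim[ξ,h]] = 2(dim g − dim k − dim h). -/

import Mathlib

/-!
Invariance makes `ad ξ` skew-adjoint, so `[ξ,g]^⊥ = ker (ad ξ)` and, taking orthogonals,
`dim (W^⊥ + [ξ,g]) = dim g - dim (W ∩ ker (ad ξ))`. As `h^⊥ + k^⊥ = g`, intersecting with `k^⊥`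
leaves dimension `dim g - dim k - dim (h ∩ ker (ad ξ))`, while
`dim [ξ,h] = dim h - dim (h ∩ ker (ad ξ))`; the kernel terms cancel between the two brackets.
-/

open Module LinearMap
open LinearMap (BilinForm)

theorem Submodule.finrank_map_add_finrank_inf_ker {K V V₂ : Type*} [DivisionRing K]
    [AddCommGroup V] [Module K V] [AddCommGroup V₂] [Module K V₂] [FiniteDimensional K V]
    (f : V →ₗ[K] V₂) (W : Submodule K V) :
    finrank K (W.map f) + finrank K ↥(W ⊓ ker f) = finrank K W := by
  rw [← f.range_domRestrict, ← Submodule.map_comap_subtype, Submodule.finrank_map_subtype_eq,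
    ← ker_domRestrict]
  exact finrank_range_add_finrank_ker _

namespace LinearMap.BilinForm

section CommSemiring

variable {R M : Type*} [CommSemiring R] [AddCommMonoid M] [Module R M] (B : BilinForm R M)

theorem orthogonal_sup (N₁ N₂ : Submodule R M) :
    B.orthogonal (N₁ ⊔ N₂) = B.orthogonal N₁ ⊓ B.orthogonal N₂ := by
  refine le_antisymm (le_inf (B.orthogonal_le le_sup_left) (B.orthogonal_le le_sup_right)) ?_
  rintro m ⟨hm₁, hm₂⟩ n hn
  obtain ⟨x, hx, y, hy, rfl⟩ := Submodule.mem_sup.mp hn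
  simp [hm₁ x hx, hm₂ y hy]

end CommSemiring

section CommRing

variable {R M : Type*} [CommRing R] [AddCommGroup M] [Module R M] {B : BilinForm R M}

theorem orthogonal_range_eq_ker (hB : B.SeparatingRight) {f : M →ₗ[R] M}
    (hf : IsSkewAdjoint B f) : B.orthogonal (range f) = ker f := by
  ext y
  simp only [mem_orthogonal_iff, mem_range, forall_exists_index, forall_apply_eq_imp_iff,
    hf _ y, Pi.neg_apply, map_neg, neg_eq_zero, mem_ker]
  exact ⟨hB _, fun hy x => by rw [hy, map_zero]⟩

end CommRing

section Field

variable {K V : Type*} [Field K] [AddCommGroup V] [Module K V] [FiniteDimensional K V]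
  {B : BilinForm K V} {f : V →ₗ[K] V}

theorem finrank_orthogonal_sup_range (hB : B.Nondegenerate) (hB₀ : B.IsRefl)
    (hf : IsSkewAdjoint B f) (W : Submodule K V) :
    finrank K ↥(B.orthogonal W ⊔ range f) = finrank K V - finrank K ↥(W ⊓ ker f) := by
  have hperp : B.orthogonal (B.orthogonal W ⊔ range f) = W ⊓ ker f := by
    rw [orthogonal_sup, orthogonal_orthogonal hB hB₀, orthogonal_range_eq_ker hB.2 hf]
  rw [← hperp, finrank_orthogonal hB]
  have := Submodule.finrank_le (B.orthogonal W ⊔ range f)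
  omega

theorem finrank_orthogonal_sup_range_inf_orthogonal (hB : B.Nondegenerate) (hB₀ : B.IsRefl)
    (hf : IsSkewAdjoint B f) {W₁ W₂ : Submodule K V}
    (hW : B.orthogonal W₁ ⊔ B.orthogonal W₂ = ⊤) :
    finrank K ↥((B.orthogonal W₁ ⊔ range f) ⊓ B.orthogonal W₂) + finrank K ↥(W₁ ⊓ ker f)
      + finrank K W₂ = finrank K V := by
  have htop : (B.orthogonal W₁ ⊔ range f) ⊔ B.orthogonal W₂ = ⊤ :=
    top_le_iff.mp (hW ▸ sup_le_sup_right le_sup_left _)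
  have hdim := Submodule.finrank_sup_add_finrank_inf_eq (B.orthogonal W₁ ⊔ range f)
    (B.orthogonal W₂)
  rw [htop, finrank_top, finrank_orthogonal_sup_range hB hB₀ hf, finrank_orthogonal hB] at hdim
  have := Submodule.finrank_le (W₁ ⊓ ker f)
  have := Submodule.finrank_le W₂
  omega

end Field

theorem lieInvariant_of_lie_assoc {R L : Type*} [CommRing R] [LieRing L] [LieAlgebra R L]
    {B : BilinForm R L} (hB : ∀ x y z : L, B ⁅x, y⁆ z = B x ⁅y, z⁆) : B.lieInvariant L :=
  fun x y z => by rw [← lie_skew, map_neg, LinearMap.neg_apply, hB]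

end LinearMap.BilinForm

theorem LieAlgebra.isSkewAdjoint_ad {R L : Type*} [CommRing R] [LieRing L] [LieAlgebra R L]
    {B : BilinForm R L} (hB : B.lieInvariant L) (ξ : L) : IsSkewAdjoint B (ad R L ξ) :=
  fun x y => by rw [Pi.neg_apply, map_neg]; exact hB ξ x y

/-- the key dimension count for bi-quotients `K\G/H`:
`[dim((h^⊥+[ξ,g]) ∩ k^⊥) − dim[ξ,k]] + [dim((k^⊥+[ξ,g]) ∩ h^⊥) − dim[ξ,h]]
  = 2(dim g − dim k − dim h)`, as an identity of integers. -/
theorem stmt7 (L : Type*) [LieRing L] [LieAlgebra ℝ L] [FiniteDimensional ℝ L]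
    (B : LinearMap.BilinForm ℝ L)
    (hsymm : ∀ x y : L, B x y = B y x)
    (hnd : B.Nondegenerate)
    (hinv : ∀ x y z : L, B ⁅x, y⁆ z = B x ⁅y, z⁆)
    (h k : LieSubalgebra ℝ L)
    (hsum : LinearMap.BilinForm.orthogonal B h.toSubmodule
        ⊔ LinearMap.BilinForm.orthogonal B k.toSubmodule = ⊤)
    (ξ : L) :
    ((Module.finrank ℝ
        ((LinearMap.BilinForm.orthogonal B h.toSubmodule
            ⊔ LinearMap.range (LieAlgebra.ad ℝ L ξ))
          ⊓ LinearMap.BilinForm.orthogonal B k.toSubmodule : Submodule ℝ L) : ℤ)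
      - (Module.finrank ℝ (Submodule.map (LieAlgebra.ad ℝ L ξ) k.toSubmodule) : ℤ))
    + ((Module.finrank ℝ
        ((LinearMap.BilinForm.orthogonal B k.toSubmodule
            ⊔ LinearMap.range (LieAlgebra.ad ℝ L ξ))
          ⊓ LinearMap.BilinForm.orthogonal B h.toSubmodule : Submodule ℝ L) : ℤ)
      - (Module.finrank ℝ (Submodule.map (LieAlgebra.ad ℝ L ξ) h.toSubmodule) : ℤ))
    = 2 * ((Module.finrank ℝ L : ℤ) - (Module.finrank ℝ k.toSubmodule : ℤ)
        - (Module.finrank ℝ h.toSubmodule : ℤ)) := by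
  have hrefl : B.IsRefl := fun x y hxy => hsymm x y ▸ hxy
  have hskew := LieAlgebra.isSkewAdjoint_ad (B.lieInvariant_of_lie_assoc hinv) ξ
  have hhk := B.finrank_orthogonal_sup_range_inf_orthogonal hnd hrefl hskew hsum
  have hkh := B.finrank_orthogonal_sup_range_inf_orthogonal hnd hrefl hskew ((sup_comm _ _).trans hsum)
  have hh := Submodule.finrank_map_add_finrank_inf_ker (LieAlgebra.ad ℝ L ξ) h.toSubmodule
  have hk := Submodule.finrank_map_add_finrank_inf_ker (LieAlgebra.ad ℝ L ξ) k.toSubmodule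
  omega
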